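/- For real a < 0, b > 0, z > 0 with Φ(a,b,z) = 0 and k = b/2 − a, the integral ∫₀^z (k/t − 1/2) e^{-t} t^b Φ²(a,b,t) dt equals z^{b+1} e^{-z} [((2k − b + 1)/(2z)) Φ²(a,b,z) + (a/b)² Φ²(a+1,b+1,z)] + z^b e^{-z} (a/b)(b − z − 1) Φ(a,b,z) Φ(a+1,b+1,z). -/

import Mathlib

/-
The integrand is an exact derivative. By `Φ'(a,b,t) = (a/b) Φ(a+1,b+1,t)` and Kummer's equation
`t Φ'' + (b - t) Φ' - a Φ = 0`,
`F(t) = e^{-t} [((1 - 2a)/2) t^b Φ(a,b,t)² + (a/b)² t^{b+1} Φ(a+1,b+1,t)²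
  + (a/b) t^b (b - t - 1) Φ(a,b,t) Φ(a+1,b+1,t)]`
satisfies `F'(t) = (k/t - 1/2) e^{-t} t^b Φ(a,b,t)²` for `t > 0`, and `F(0) = 0` since `b > 0`.
The theorem is `∫₀^z F' = F(z)`, and `2k - b + 1 = 1 - 2a`.
-/

open Real

/-- The confluent hypergeometric function of the first kind
`Φ(a,b,z) = Σ_{n≥0} (a)_n / ((b)_n n!) z^n`. -/
noncomputable def Phi (a b z : ℝ) : ℝ :=
  ∑' n : ℕ, ((ascPochhammer ℝ n).eval a / ((ascPochhammer ℝ n).eval b * (n.factorial : ℝ))) * z ^ n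

theorem hasDerivAt_tsum_mul_pow {c : ℕ → ℝ} {R t : ℝ} (hR : 1 ≤ R) (ht : |t| < R)
    (hc : Summable fun n => |c n| * (n + 1) * R ^ n) :
    HasDerivAt (fun x => ∑' n, c n * x ^ n) (∑' n, c (n + 1) * (n + 1) * t ^ n) t := by
  have bound : ∀ n, ∀ y ∈ Set.Ioo (-R) R,
      ‖c n * (n * y ^ (n - 1))‖ ≤ |c n| * (n + 1) * R ^ n := by
    intro n y hy
    have hyR : |y| ≤ R := abs_le.2 ⟨hy.1.le, hy.2.le⟩
    have hpow : |y| ^ (n - 1) ≤ R ^ n :=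
      (pow_le_pow_left₀ (abs_nonneg y) hyR _).trans (pow_le_pow_right₀ hR (Nat.sub_le n 1))
    rw [Real.norm_eq_abs, abs_mul, abs_mul, abs_pow, Nat.abs_cast, mul_assoc]
    gcongr
    nlinarith [pow_nonneg (zero_le_one.trans hR) n, (Nat.cast_nonneg n : (0 : ℝ) ≤ n)]
  have htR : t ∈ Set.Ioo (-R) R := abs_lt.1 ht
  have hsum : Summable fun n => c n * t ^ n :=
    hc.of_norm_bounded fun n => by
      rw [Real.norm_eq_abs, abs_mul, abs_pow, mul_assoc]
      gcongr
      nlinarith [pow_le_pow_left₀ (abs_nonneg t) ht.le n, pow_nonneg (abs_nonneg t) n,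
        (Nat.cast_nonneg n : (0 : ℝ) ≤ n)]
  have hderiv := hasDerivAt_tsum_of_isPreconnected hc isOpen_Ioo isPreconnected_Ioo
    (fun n y _ => (hasDerivAt_pow n y).const_mul (c n)) bound htR hsum htR
  have hshift : ∑' n, c n * (n * t ^ (n - 1)) = ∑' n, c (n + 1) * (n + 1) * t ^ n := by
    rw [(hc.of_norm_bounded fun n => bound n t htR).tsum_eq_zero_add]
    simp only [CharP.cast_eq_zero, zero_mul, mul_zero, zero_add, Nat.cast_add, Nat.cast_one,
      Nat.add_sub_cancel, mul_assoc]
  rwa [hshift] at hderiv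

noncomputable def phiCoeff (a b : ℝ) (n : ℕ) : ℝ :=
  (ascPochhammer ℝ n).eval a / ((ascPochhammer ℝ n).eval b * (n.factorial : ℝ))

theorem Phi_eq_tsum (a b t : ℝ) : Phi a b t = ∑' n, phiCoeff a b n * t ^ n := rfl

theorem phiCoeff_zero (a b : ℝ) : phiCoeff a b 0 = 1 := by simp [phiCoeff]

theorem ascPochhammer_succ_eval_left (n : ℕ) (x : ℝ) :
    (ascPochhammer ℝ (n + 1)).eval x = x * (ascPochhammer ℝ n).eval (x + 1) := by
  simp [ascPochhammer_succ_left, Polynomial.eval_comp]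

section Coefficients

variable (a : ℝ) {b : ℝ}

theorem phiCoeff_succ (hb : 0 < b) (n : ℕ) :
    phiCoeff a b (n + 1) = phiCoeff a b n * ((a + n) / ((b + n) * (n + 1))) := by
  have := ascPochhammer_pos n b hb
  have := n.factorial_pos
  unfold phiCoeff
  rw [ascPochhammer_succ_eval, ascPochhammer_succ_eval, Nat.factorial_succ]
  push_cast
  field_simp

theorem phiCoeff_succ_mul (hb : 0 < b) (n : ℕ) :
    phiCoeff a b (n + 1) * (n + 1) = a / b * phiCoeff (a + 1) (b + 1) n := by
  have := ascPochhammer_pos n (b + 1) (by linarith)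
  have := n.factorial_pos
  unfold phiCoeff
  rw [ascPochhammer_succ_eval_left n a, ascPochhammer_succ_eval_left n b, Nat.factorial_succ]
  push_cast
  field_simp

theorem phiCoeff_contiguous (hb : 0 < b) (n : ℕ) :
    (a + 1) / (b + 1) * phiCoeff (a + 2) (b + 2) n =
      phiCoeff (a + 1) (b + 1) n + b * phiCoeff a b (n + 1) -
        b * phiCoeff (a + 1) (b + 1) (n + 1) := by
  have h := phiCoeff_succ_mul (a + 1) (show 0 < b + 1 by linarith) n
  rw [show a + 1 + 1 = a + 2 by ring, show b + 1 + 1 = b + 2 by ring] at h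
  rw [← h]
  have := ascPochhammer_pos n (b + 1) (by linarith)
  have := n.factorial_pos
  unfold phiCoeff
  rw [ascPochhammer_succ_eval_left n a, ascPochhammer_succ_eval_left n b,
    ascPochhammer_succ_eval n (a + 1), ascPochhammer_succ_eval n (b + 1), Nat.factorial_succ]
  push_cast
  field_simp
  ring

theorem summable_abs_phiCoeff_mul_pow (hb : 0 < b) {R : ℝ} (hR : 0 ≤ R) :
    Summable fun n => |phiCoeff a b n| * (n + 1) * R ^ n := by
  refine summable_of_ratio_norm_eventually_le (r := 1 / 2) (by norm_num) ?_
  filter_upwards [Filter.eventually_ge_atTop (⌈|a|⌉₊ + ⌈8 * R⌉₊ + 1)] with n hn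
  have ha : |a| ≤ n := (Nat.le_ceil _).trans (by exact_mod_cast (by omega : ⌈|a|⌉₊ ≤ n))
  have hR8 : 8 * R ≤ n :=
    (Nat.le_ceil _).trans (by exact_mod_cast (by omega : ⌈8 * R⌉₊ ≤ n))
  have hn1 : (1 : ℝ) ≤ n := by exact_mod_cast (by omega : 1 ≤ n)
  have han : |a + n| ≤ |a| + n := (abs_add_le a _).trans_eq (by rw [Nat.abs_cast])
  rw [Real.norm_of_nonneg (by positivity), Real.norm_of_nonneg (by positivity)]
  calc |phiCoeff a b (n + 1)| * ((n + 1 : ℕ) + 1) * R ^ (n + 1)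
      = |phiCoeff a b n| * R ^ n * (|a + n| * (n + 2) * R / ((b + n) * (n + 1))) := by
        rw [phiCoeff_succ a hb, abs_mul, abs_div,
          abs_of_pos (by positivity : (0 : ℝ) < (b + n) * (n + 1)), pow_succ]
        push_cast
        ring
    _ ≤ |phiCoeff a b n| * R ^ n * ((n + 1) / 2) := by
        refine mul_le_mul_of_nonneg_left ?_ (by positivity)
        rw [div_le_div_iff₀ (by positivity) two_pos]
        calc |a + n| * (n + 2) * R * 2 ≤ (2 * n) * (n + 2) * R * 2 := by gcongr; linarith
          _ = n * (n + 2) * (4 * R) := by ring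
          _ ≤ n * (n + 2) * (n / 2) := by gcongr; linarith
          _ ≤ (n + 1) * ((b + n) * (n + 1)) := by
            nlinarith [mul_nonneg hb.le (sq_nonneg ((n : ℝ) + 1)),
              mul_nonneg (Nat.cast_nonneg n : (0 : ℝ) ≤ n) (sq_nonneg (n : ℝ))]
    _ = 1 / 2 * (|phiCoeff a b n| * (n + 1) * R ^ n) := by ring

theorem summable_phiCoeff_mul_pow (hb : 0 < b) (t : ℝ) :
    Summable fun n => phiCoeff a b n * t ^ n :=
  (summable_abs_phiCoeff_mul_pow a hb (abs_nonneg t)).of_norm_bounded fun n => by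
    rw [Real.norm_eq_abs, abs_mul, abs_pow]
    nlinarith [mul_nonneg (abs_nonneg (phiCoeff a b n)) (pow_nonneg (abs_nonneg t) n)]

end Coefficients

section Kummer

variable (a : ℝ) {b : ℝ}

theorem hasDerivAt_Phi (hb : 0 < b) (t : ℝ) :
    HasDerivAt (Phi a b) (a / b * Phi (a + 1) (b + 1) t) t := by
  have h := hasDerivAt_tsum_mul_pow (by linarith [abs_nonneg t]) (lt_add_one |t|)
    (summable_abs_phiCoeff_mul_pow a hb (by positivity : 0 ≤ |t| + 1))
  simp only [phiCoeff_succ_mul a hb, mul_assoc, tsum_mul_left] at h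
  exact h

theorem continuous_Phi (hb : 0 < b) : Continuous (Phi a b) :=
  continuous_iff_continuousAt.2 fun t => (hasDerivAt_Phi a hb t).continuousAt

/-- Kummer's equation `t Φ'' + (b - t) Φ' - a Φ = 0`, with `Φ' = (a / b) Φ(a + 1, b + 1)`,
divided by `a / b`. -/
theorem Phi_contiguous (hb : 0 < b) (t : ℝ) :
    t * ((a + 1) / (b + 1) * Phi (a + 2) (b + 2) t) =
      (t - b) * Phi (a + 1) (b + 1) t + b * Phi a b t := by
  have h0 := (summable_phiCoeff_mul_pow a hb t).hasSum
  have h1 := (summable_phiCoeff_mul_pow (a + 1) (show 0 < b + 1 by linarith) t).hasSum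
  have h2 := (summable_phiCoeff_mul_pow (a + 2) (show 0 < b + 2 by linarith) t).hasSum
  have hlhs := h2.mul_left (t * ((a + 1) / (b + 1)))
  have hrhs := (h1.mul_left t).add
    (((hasSum_nat_add_iff' 1).2 h0).mul_left b |>.sub (((hasSum_nat_add_iff' 1).2 h1).mul_left b))
  have hterms : (fun n => t * ((a + 1) / (b + 1)) * (phiCoeff (a + 2) (b + 2) n * t ^ n)) =
      fun n => t * (phiCoeff (a + 1) (b + 1) n * t ^ n) +
        (b * (phiCoeff a b (n + 1) * t ^ (n + 1)) -
          b * (phiCoeff (a + 1) (b + 1) (n + 1) * t ^ (n + 1))) := by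
    funext n
    rw [pow_succ]
    linear_combination (t ^ n * t) * phiCoeff_contiguous a hb n
  rw [hterms] at hlhs
  have := hlhs.unique hrhs
  simp only [Finset.range_one, Finset.sum_singleton, phiCoeff_zero, pow_zero, mul_one] at this
  simp only [Phi_eq_tsum]
  linear_combination this

end Kummer

noncomputable def phiSqPrimitive (a b t : ℝ) : ℝ :=
  exp (-t) * ((1 - 2 * a) / 2 * t ^ b * Phi a b t ^ 2
    + (a / b) ^ 2 * t ^ (b + 1) * Phi (a + 1) (b + 1) t ^ 2
    + a / b * t ^ b * (b - t - 1) * Phi a b t * Phi (a + 1) (b + 1) t)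

section Primitive

variable (a : ℝ) {b : ℝ}

theorem continuous_phiSqPrimitive (hb : 0 < b) : Continuous (phiSqPrimitive a b) := by
  have := continuous_Phi a hb
  have := continuous_Phi (a + 1) (show 0 < b + 1 by linarith)
  have := continuous_rpow_const hb.le
  have := continuous_rpow_const (show 0 ≤ b + 1 by linarith)
  unfold phiSqPrimitive
  fun_prop

theorem phiSqPrimitive_zero (hb : 0 < b) : phiSqPrimitive a b 0 = 0 := by
  simp [phiSqPrimitive, zero_rpow hb.ne', zero_rpow (show b + 1 ≠ 0 by linarith)]

theorem hasDerivAt_phiSqPrimitive (hb : 0 < b) {t : ℝ} (ht : 0 < t) :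
    HasDerivAt (phiSqPrimitive a b)
      (((b / 2 - a) / t - 1 / 2) * exp (-t) * t ^ b * Phi a b t ^ 2) t := by
  have hb1 : 0 < b + 1 := by linarith
  have hΦ := hasDerivAt_Phi a hb t
  have hΦ₁ : HasDerivAt (Phi (a + 1) (b + 1))
      (((t - b) * Phi (a + 1) (b + 1) t + b * Phi a b t) / t) t := by
    convert hasDerivAt_Phi (a + 1) hb1 t using 1
    rw [div_eq_iff ht.ne', ← Phi_contiguous a hb t]
    ring_nf
  have hpow := hasDerivAt_rpow_const (p := b) (Or.inl ht.ne')
  have hpow₁ := hasDerivAt_rpow_const (p := b + 1) (Or.inl ht.ne')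
  have hexp : HasDerivAt (fun s => exp (-s)) (-exp (-t)) t := by
    simpa using (hasDerivAt_neg t).exp
  have hlin : HasDerivAt (fun s => b - s - 1) (-1) t := by
    simpa using ((hasDerivAt_id t).const_sub b).sub_const 1
  have H := hexp.mul ((((hpow.const_mul ((1 - 2 * a) / 2)).mul (hΦ.pow 2)).add
      ((hpow₁.const_mul ((a / b) ^ 2)).mul (hΦ₁.pow 2))).add
      ((((hpow.const_mul (a / b)).mul hlin).mul hΦ).mul hΦ₁))
  refine H.congr_deriv ?_
  simp only [Pi.mul_apply, Pi.add_apply, Pi.pow_apply]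
  rw [add_sub_cancel_right, rpow_sub_one ht.ne', rpow_add_one ht.ne']
  field_simp
  ring

end Primitive

theorem intervalIntegrable_phiSq_integrand (a : ℝ) {b : ℝ} (hb : 0 < b) (k z : ℝ) :
    IntervalIntegrable (fun t => (k / t - 1 / 2) * exp (-t) * t ^ b * Phi a b t ^ 2)
      MeasureTheory.volume 0 z := by
  have hcont : Continuous fun t => exp (-t) * Phi a b t ^ 2 := by
    have := continuous_Phi a hb
    fun_prop
  have hpow :
      IntervalIntegrable (fun t => k * t ^ (b - 1) - 1 / 2 * t ^ b) MeasureTheory.volume 0 z :=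
    ((intervalIntegral.intervalIntegrable_rpow' (by linarith)).const_mul k).sub
      ((intervalIntegral.intervalIntegrable_rpow' (by linarith)).const_mul (1 / 2))
  refine (hpow.mul_continuousOn hcont.continuousOn).congr_uIoo fun t ht => ?_
  have ht0 : t ≠ 0 := by
    rintro rfl
    rcases le_total 0 z with hz | hz <;> simp_all [Set.uIoo]
  simp only [rpow_sub_one ht0]
  field_simp

theorem stmt1_general (a b z : ℝ) (hb : 0 < b) (hz : 0 < z)
    (k : ℝ) (hk : k = b / 2 - a) :
    ∫ t in (0 : ℝ)..z, (k / t - 1 / 2) * Real.exp (-t) * t ^ b * (Phi a b t) ^ 2 =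
      z ^ (b + 1) * Real.exp (-z) *
          (((2 * k - b + 1) / (2 * z)) * (Phi a b z) ^ 2 +
            (a / b) ^ 2 * (Phi (a + 1) (b + 1) z) ^ 2) +
        z ^ b * Real.exp (-z) * (a / b) * (b - z - 1) * Phi a b z * Phi (a + 1) (b + 1) z := by
  subst hk
  rw [intervalIntegral.integral_eq_sub_of_hasDeriv_right_of_le hz.le
    (continuous_phiSqPrimitive a hb).continuousOn
    (fun t ht => (hasDerivAt_phiSqPrimitive a hb ht.1).hasDerivWithinAt)
    (intervalIntegrable_phiSq_integrand a hb _ z), phiSqPrimitive_zero a hb, sub_zero,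
    phiSqPrimitive, rpow_add_one hz.ne']
  field_simp
  ring

theorem stmt1 (a b z : ℝ) (ha : a < 0) (hb : 0 < b) (hz : 0 < z)
    (hzero : Phi a b z = 0) (k : ℝ) (hk : k = b / 2 - a) :
    ∫ t in (0 : ℝ)..z, (k / t - 1 / 2) * Real.exp (-t) * t ^ b * (Phi a b t) ^ 2 =
      z ^ (b + 1) * Real.exp (-z) *
          (((2 * k - b + 1) / (2 * z)) * (Phi a b z) ^ 2 +
            (a / b) ^ 2 * (Phi (a + 1) (b + 1) z) ^ 2) +
        z ^ b * Real.exp (-z) * (a / b) * (b - z - 1) * Phi a b z * Phi (a + 1) (b + 1) z :=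
  stmt1_general a b z hb hz k hk
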